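/- As ξ → ∞, e^{−ξ}·W₁(ξ) tends to 2/3, where W₁(ξ) = Σ_{k=0}^∞ ξ^{3k/2+1}/Γ(3k/2 + 2). Hence the solution of the Caputo fractional reaction equation D^{3/2}_* V = V with V(0) = 0, V'(0) = 1 grows exponentially like e^ξ as ξ → ∞; this is the exponential behavior underlying the classical boundary layer of width ε^{2/3} at x = 1 in the reaction–diffusion problem with α = 1/2. -/

import Mathlib

open Filter


/-- `W₀(ξ) = Σ_{k=0}^∞ ξ^{3k/2}/Γ(3k/2 + 1)` (real powers `Real.rpow`). -/
noncomputable def W0 (ξ : ℝ) : ℝ :=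
  ∑' k : ℕ, ξ ^ (3 * (k : ℝ) / 2) / Real.Gamma (3 * (k : ℝ) / 2 + 1)

/-- `W₁(ξ) = Σ_{k=0}^∞ ξ^{3k/2+1}/Γ(3k/2 + 2)` (real powers `Real.rpow`). -/
noncomputable def W1 (ξ : ℝ) : ℝ :=
  ∑' k : ℕ, ξ ^ (3 * (k : ℝ) / 2 + 1) / Real.Gamma (3 * (k : ℝ) / 2 + 2)

/-- `W = W₀ − W₁`. -/
noncomputable def W (ξ : ℝ) : ℝ := W0 ξ - W1 ξ


namespace Stmt17Aux

/-- coefficients of the order-1/2 Mittag-Leffler function -/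
noncomputable def a (n : ℕ) : ℝ := 1 / Real.Gamma ((n : ℝ) / 2 + 1)

lemma gamma_arg_pos (n : ℕ) : (0:ℝ) < (n : ℝ) / 2 + 1 := by positivity

lemma gamma_pos (n : ℕ) : 0 < Real.Gamma ((n : ℝ) / 2 + 1) :=
  Real.Gamma_pos_of_pos (gamma_arg_pos n)

lemma a_pos (n : ℕ) : 0 < a n := by
  have := gamma_pos n; unfold a; positivity

lemma gamma_halfint (m : ℕ) : (1/2 : ℝ) * m.factorial ≤ Real.Gamma ((m : ℝ) + 3/2) := by
  induction m with
  | zero =>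
      simp only [Nat.factorial_zero, Nat.cast_zero, Nat.cast_one, zero_add, mul_one]
      have h32 : (3/2 : ℝ) = 1/2 + 1 := by norm_num
      rw [h32, Real.Gamma_add_one (by norm_num), Real.Gamma_one_half_eq]
      nlinarith [Real.sq_sqrt Real.pi_pos.le, Real.sqrt_nonneg Real.pi,
        Real.pi_gt_three]
  | succ m ih =>
      have h : ((m+1 : ℕ) : ℝ) + 3/2 = ((m:ℝ) + 3/2) + 1 := by push_cast; ring
      rw [h, Real.Gamma_add_one (by positivity)]
      have h2 : ((m:ℝ) + 3/2) * Real.Gamma ((m:ℝ) + 3/2) ≥ ((m:ℝ)+1) * ((1/2) * m.factorial) := by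
        have hg := Real.Gamma_pos_of_pos (show (0:ℝ) < (m:ℝ)+3/2 by positivity)
        nlinarith [ih, Nat.cast_nonneg (α := ℝ) m, hg]
      calc (1/2 : ℝ) * (m+1).factorial = ((m:ℝ)+1) * ((1/2) * m.factorial) := by
            rw [Nat.factorial_succ]; push_cast; ring
        _ ≤ _ := h2

lemma gamma_ge_fact (n : ℕ) :
    (1/2 : ℝ) * (n / 2).factorial ≤ Real.Gamma ((n : ℝ) / 2 + 1) := by
  rcases Nat.even_or_odd n with ⟨m, hm⟩ | ⟨m, hm⟩
  · subst hm
    have h1 : ((m + m : ℕ) : ℝ) / 2 + 1 = (m : ℝ) + 1 := by push_cast; ring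
    have h2 : (m + m) / 2 = m := by omega
    rw [h1, h2, Real.Gamma_nat_eq_factorial]
    nlinarith [(Nat.cast_pos (α := ℝ)).2 (Nat.factorial_pos m)]
  · subst hm
    have h1 : ((2*m + 1 : ℕ) : ℝ) / 2 + 1 = (m : ℝ) + 3/2 := by push_cast; ring
    have h2 : (2*m + 1) / 2 = m := by omega
    rw [h1, h2]
    exact gamma_halfint m

lemma a_le (n : ℕ) : a n ≤ 2 / (n / 2).factorial := by
  unfold a
  rw [div_le_div_iff₀ (gamma_pos n) (by positivity)]
  have := gamma_ge_fact n
  nlinarith [(Nat.cast_pos (α := ℝ)).2 (Nat.factorial_pos (n/2))]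

set_option maxHeartbeats 1000000 in
lemma summable_base {r : ℝ} (hr : 0 ≤ r) :
    Summable (fun n : ℕ => r ^ n / ((n / 2).factorial : ℝ)) := by
  have he : Summable (fun k : ℕ => r ^ (2*k) / (((2*k) / 2).factorial : ℝ)) := by
    have : (fun k : ℕ => r ^ (2*k) / (((2*k) / 2).factorial : ℝ))
        = fun k : ℕ => (r^2) ^ k / (k.factorial : ℝ) := by
      funext k
      have : (2*k)/2 = k := by omega
      rw [this, pow_mul]
    rw [this]
    exact Real.summable_pow_div_factorial (r^2)
  have ho : Summable (fun k : ℕ => r ^ (2*k+1) / (((2*k+1) / 2).factorial : ℝ)) := by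
    have : (fun k : ℕ => r ^ (2*k+1) / (((2*k+1) / 2).factorial : ℝ))
        = fun k : ℕ => r * ((r^2) ^ k / (k.factorial : ℝ)) := by
      funext k
      have : (2*k+1)/2 = k := by omega
      rw [this, pow_succ, pow_mul]; ring
    rw [this]
    exact (Real.summable_pow_div_factorial (r^2)).mul_left r
  exact (he.hasSum.even_add_odd ho.hasSum).summable

lemma summable_ar {r : ℝ} (hr : 0 ≤ r) : Summable (fun n : ℕ => a n * r ^ n) := by
  refine Summable.of_nonneg_of_le (fun n => mul_nonneg (a_pos n).le (pow_nonneg hr n))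
    (fun n => ?_) (((summable_base hr).mul_left 2))
  have h1 : a n * r ^ n ≤ (2 / (n / 2).factorial) * r ^ n :=
    mul_le_mul_of_nonneg_right (a_le n) (by positivity)
  calc a n * r ^ n ≤ (2 / (n / 2).factorial) * r ^ n := h1
    _ = 2 * (r ^ n / ((n / 2).factorial : ℝ)) := by ring

/-- The order-1/2 Mittag-Leffler function. -/
noncomputable def E (z : ℂ) : ℂ := ∑' n : ℕ, (a n : ℂ) * z ^ n

lemma norm_term (n : ℕ) (z : ℂ) : ‖(a n : ℂ) * z ^ n‖ = a n * ‖z‖ ^ n := by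
  rw [norm_mul, norm_pow, Complex.norm_real, Real.norm_eq_abs, abs_of_pos (a_pos n)]

lemma summable_norm_E (z : ℂ) : Summable (fun n : ℕ => ‖(a n : ℂ) * z ^ n‖) := by
  simpa only [norm_term] using summable_ar (norm_nonneg z)

lemma summable_E (z : ℂ) : Summable (fun n : ℕ => (a n : ℂ) * z ^ n) :=
  (summable_norm_E z).of_norm

lemma E_zero : E 0 = 1 := by
  unfold E
  rw [tsum_eq_single 0 (fun n hn => by simp [zero_pow hn])]
  simp [a, Real.Gamma_one]

lemma a_one : a 1 = 2 / Real.sqrt Real.pi := by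
  unfold a
  have : ((1:ℕ):ℝ)/2 + 1 = 1/2 + 1 := by norm_num
  rw [this, Real.Gamma_add_one (by norm_num), Real.Gamma_one_half_eq]
  rw [div_mul_eq_mul_div, one_div, mul_comm]
  field_simp

lemma a_rec (n : ℕ) : ((n:ℝ) + 2) * a (n + 2) = 2 * a n := by
  unfold a
  have h1 : ((n + 2 : ℕ) : ℝ) / 2 + 1 = ((n:ℝ)/2 + 1) + 1 := by push_cast; ring
  rw [h1, Real.Gamma_add_one (ne_of_gt (gamma_arg_pos n))]
  have hg := gamma_pos n
  have h2 : (n:ℝ)/2 + 1 ≠ 0 := ne_of_gt (gamma_arg_pos n)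
  field_simp

/-- primitive cube root of unity -/
noncomputable def ω : ℂ := ⟨-1/2, Real.sqrt 3 / 2⟩

lemma ω_eq : ω = (-1/2 : ℝ) + (Real.sqrt 3 / 2 : ℝ) * Complex.I := by
  unfold ω; exact Complex.mk_eq_add_mul_I _ _

lemma s3 : ((Real.sqrt 3 : ℝ) : ℂ)^2 = 3 := by
  rw [← Complex.ofReal_pow, Real.sq_sqrt (by norm_num : (3:ℝ) ≥ 0)]
  norm_num

lemma hω2 : ω^2 = (-1/2 : ℝ) - (Real.sqrt 3 / 2 : ℝ) * Complex.I := by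
  rw [ω_eq]
  push_cast
  linear_combination (((Real.sqrt 3:ℝ):ℂ)^2/4) * Complex.I_sq - (1/4 : ℂ) * s3

lemma hω3 : ω^3 = 1 := by
  have h : ω^3 = ω^2 * ω := by ring
  rw [h, hω2, ω_eq]
  push_cast
  linear_combination (-(((Real.sqrt 3:ℝ):ℂ)^2)/4) * Complex.I_sq + (1/4 : ℂ) * s3

lemma hωsum : 1 + ω + ω^2 = 0 := by
  rw [ω_eq]; push_cast
  linear_combination (((Real.sqrt 3:ℝ):ℂ)^2/4) * Complex.I_sq - (1/4 : ℂ) * s3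

lemma ω_pow_mod (n : ℕ) : ω ^ n = ω ^ (n % 3) := by
  conv_lhs => rw [← Nat.div_add_mod n 3]
  rw [pow_add, pow_mul, hω3, one_pow, one_mul]

lemma cube_ind (n : ℕ) : 1 + ω^n + ω^(2*n) = if n % 3 = 0 then 3 else 0 := by
  have h2 : ω^(2*n) = (ω^(n % 3))^2 := by rw [mul_comm, pow_mul, ω_pow_mod]
  rw [ω_pow_mod n, h2]
  have h3 : n % 3 < 3 := Nat.mod_lt _ (by norm_num)
  interval_cases h : n % 3
  · norm_num
  · rw [if_neg (show ¬(1 = 0) by norm_num)]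
    linear_combination hωsum
  · rw [if_neg (show ¬(2 = 0) by norm_num)]
    have h4 : (ω^2)^2 = ω := by
      have h5 : (ω^2)^2 = ω^3 * ω := by ring
      rw [h5, hω3, one_mul]
    rw [h4]
    linear_combination hωsum

lemma normSq_ω : Complex.normSq ω = 1 := by
  simp only [Complex.normSq_mk, ω]
  nlinarith [Real.sq_sqrt (by norm_num : (3:ℝ) ≥ 0)]

lemma abs_ω : ‖ω‖ = 1 := by
  rw [Complex.norm_def, normSq_ω, Real.sqrt_one]

lemma norm_ω_pow (k : ℕ) : ‖ω ^ k‖ = 1 := by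
  rw [norm_pow, abs_ω, one_pow]

lemma re_ω2 : (ω^2).re = -(1/2) := by rw [hω2]; simp; norm_num

lemma re_ω4 : (ω^4).re = -(1/2) := by
  have : ω^4 = ω^3 * ω := by ring
  rw [this, hω3, one_mul]
  simp [ω]; norm_num

lemma summable_deriv_terms {R : ℝ} (hR : 0 ≤ R) :
    Summable (fun n : ℕ => a n * n * R ^ (n - 1)) := by
  rw [← summable_nat_add_iff 2]
  have key : (fun n : ℕ => a (n + 2) * ((n + 2 : ℕ) : ℝ) * R ^ (n + 2 - 1))
      = fun n : ℕ => (2 * R) * (a n * R ^ n) := by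
    funext n
    have h1 : ((n:ℝ) + 2) * a (n + 2) = 2 * a n := a_rec n
    have h2 : n + 2 - 1 = n + 1 := by omega
    rw [h2, pow_succ]
    push_cast
    linear_combination (R ^ n * R) * h1
  rw [key]
  exact (summable_ar hR).mul_left (2 * R)

lemma norm_deriv_term (n : ℕ) (y : ℂ) :
    ‖(a n : ℂ) * ((n : ℂ) * y ^ (n - 1))‖ = a n * n * ‖y‖ ^ (n - 1) := by
  rw [norm_mul, norm_mul, norm_pow, Complex.norm_real, Complex.norm_natCast,
    Real.norm_eq_abs, abs_of_pos (a_pos n)]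
  ring

lemma hasDerivAt_E (z : ℂ) :
    HasDerivAt E (((2 / Real.sqrt Real.pi : ℝ) : ℂ) + 2 * z * E z) z := by
  classical
  set R : ℝ := ‖z‖ + 1 with hRdef
  have hR0 : 0 ≤ R := by positivity
  have hzR : ‖z‖ ≤ R := by simp [hRdef]
  have hball : z ∈ Metric.ball (0:ℂ) R := by
    simp only [Metric.mem_ball, Complex.dist_eq, sub_zero, hRdef]
    calc ‖z‖ = ‖z‖ := rfl
      _ < ‖z‖ + 1 := by linarith
  have hder : HasDerivAt (fun w => ∑' n : ℕ, (a n : ℂ) * w ^ n)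
      (∑' n : ℕ, (a n : ℂ) * ((n : ℂ) * z ^ (n - 1))) z := by
    apply hasDerivAt_tsum_of_isPreconnected
      (u := fun n : ℕ => a n * n * R ^ (n - 1))
      (summable_deriv_terms hR0) Metric.isOpen_ball
      (convex_ball (0:ℂ) R).isPreconnected
      (fun n y _ => ((hasDerivAt_pow n y).const_mul (a n : ℂ)))
      (fun n y hy => ?_) (Metric.mem_ball_self (by positivity)) (summable_E 0) hball
    have hy' : ‖y‖ ≤ R := by
      have := Metric.mem_ball.1 hy
      rw [Complex.dist_eq, sub_zero] at this
      exact this.le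
    rw [norm_deriv_term]
    have h1 : ‖y‖ ^ (n-1) ≤ R ^ (n-1) := pow_le_pow_left₀ (norm_nonneg y) hy' _
    have h2 : 0 ≤ a n * n := mul_nonneg (a_pos n).le (Nat.cast_nonneg n)
    calc a n * n * ‖y‖^(n-1) ≤ a n * n * R^(n-1) := mul_le_mul_of_nonneg_left h1 h2
      _ = a n * n * R ^ (n-1) := by ring
  have heq : (fun w => ∑' n : ℕ, (a n : ℂ) * w ^ n) = E := rfl
  rw [heq] at hder
  convert hder using 1
  -- identity: ∑' n, a n * (n * z^(n-1)) = 2/√π + 2 z E z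
  have hsum : Summable (fun n : ℕ => (a n : ℂ) * ((n:ℂ) * z ^ (n - 1))) := by
    apply Summable.of_norm
    apply Summable.of_nonneg_of_le (fun n => norm_nonneg _)
      (fun n => ?_) (summable_deriv_terms hR0)
    rw [norm_deriv_term]
    have h1 : ‖z‖ ^ (n-1) ≤ R ^ (n-1) := pow_le_pow_left₀ (norm_nonneg z) hzR _
    have h2 : 0 ≤ a n * n := mul_nonneg (a_pos n).le (Nat.cast_nonneg n)
    exact mul_le_mul_of_nonneg_left h1 h2
  rw [Summable.tsum_eq_zero_add hsum]
  simp only [Nat.cast_zero, zero_mul, mul_zero, zero_add, Nat.add_sub_cancel]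
  have hsum1 : Summable (fun n : ℕ => (a (n+1) : ℂ) * (((n:ℂ)+1) * z ^ n)) := by
    have h := (summable_nat_add_iff 1).2 hsum
    apply h.congr
    intro n
    simp only [Nat.add_sub_cancel]
    push_cast
    ring
  have hshift : ∑' n : ℕ, (a (n+1) : ℂ) * (((n+1:ℕ):ℂ) * z ^ n)
      = (a 1 : ℂ) + ∑' n : ℕ, (a (n+2) : ℂ) * (((n+2:ℕ):ℂ) * z ^ (n+1)) := by
    rw [Summable.tsum_eq_zero_add (by exact hsum1.congr (fun n => by push_cast; ring))]
    norm_num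
    exact tsum_congr fun b => by
      have hb : b + 1 + 1 = b + 2 := rfl
      rw [hb]; push_cast; ring
  have h2 : ∑' n : ℕ, (a (n+2) : ℂ) * (((n+2:ℕ):ℂ) * z ^ (n+1)) = 2 * z * E z := by
    have hterm : ∀ n : ℕ, (a (n+2) : ℂ) * (((n+2:ℕ):ℂ) * z ^ (n+1))
        = (2*z) * ((a n : ℂ) * z ^ n) := by
      intro n
      have hr : ((n:ℝ) + 2) * a (n + 2) = 2 * a n := a_rec n
      have hrc : ((n:ℂ) + 2) * (a (n + 2) : ℂ) = 2 * (a n : ℂ) := by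
        exact_mod_cast congrArg (fun x : ℝ => (x : ℂ)) hr
      push_cast
      linear_combination (z ^ n * z) * hrc
    rw [tsum_congr hterm, tsum_mul_left]
    rfl
  calc ((2 / Real.sqrt Real.pi : ℝ) : ℂ) + 2 * z * E z
      = (a 1 : ℂ) + 2 * z * E z := by rw [a_one]
    _ = ∑' n : ℕ, (a (n+1) : ℂ) * (((n+1:ℕ):ℂ) * z ^ n) := by rw [hshift, h2]

noncomputable def φ (u : ℂ) (t : ℝ) : ℂ := Complex.exp (-(u^2) * t^2) * E (u * t)

lemma phi_deriv (u : ℂ) (t : ℝ) :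
    HasDerivAt (φ u) (2 * u / (Real.sqrt Real.pi : ℂ) * Complex.exp (-(u^2) * t^2)) t := by
  have hlin : HasDerivAt (fun w : ℂ => u * w) u (t : ℂ) := by
    simpa using (hasDerivAt_id (t : ℂ)).const_mul u
  have hE : HasDerivAt (fun s : ℝ => E (u * s))
      ((((2 / Real.sqrt Real.pi : ℝ) : ℂ) + 2 * (u * t) * E (u * t)) * u) t :=
    ((hasDerivAt_E (u * t)).comp (t : ℂ) hlin).comp_ofReal
  have hinner : HasDerivAt (fun w : ℂ => -(u^2) * w^2) (-(u^2) * (2 * t)) (t : ℂ) := by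
    have := (hasDerivAt_pow 2 (t : ℂ)).const_mul (-(u^2))
    simpa [pow_one, mul_assoc] using this
  have hexp : HasDerivAt (fun s : ℝ => Complex.exp (-(u^2) * s^2))
      (Complex.exp (-(u^2) * t^2) * (-(u^2) * (2 * t))) t :=
    ((Complex.hasDerivAt_exp _).comp (t : ℂ) hinner).comp_ofReal
  have : HasDerivAt (φ u) _ t := hexp.mul hE
  convert this using 1
  have hpi : ((Real.sqrt Real.pi : ℝ) : ℂ) ≠ 0 := by
    simp only [ne_eq, Complex.ofReal_eq_zero]
    exact Real.sqrt_ne_zero'.2 Real.pi_pos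
  push_cast
  field_simp
  ring

lemma phi_zero (u : ℂ) : φ u 0 = 1 := by
  simp [φ, E_zero]

lemma cont_integrand (u : ℂ) :
    Continuous (fun s : ℝ => 2 * u / (Real.sqrt Real.pi : ℂ) * Complex.exp (-(u^2) * s^2)) := by
  apply Continuous.mul continuous_const
  exact Complex.continuous_exp.comp (continuous_const.mul (Complex.continuous_ofReal.pow 2))

lemma phi_eq (u : ℂ) (t : ℝ) :
    φ u t = 1 + ∫ s in (0:ℝ)..t, 2 * u / (Real.sqrt Real.pi : ℂ) * Complex.exp (-(u^2) * s^2) := by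
  have h := intervalIntegral.integral_eq_sub_of_hasDerivAt
    (f := φ u) (f' := fun s => 2 * u / (Real.sqrt Real.pi : ℂ) * Complex.exp (-(u^2) * s^2))
    (fun s _ => phi_deriv u s) ((cont_integrand u).intervalIntegrable 0 t)
  rw [h, phi_zero]
  ring

lemma tendsto_gauss :
    Filter.Tendsto (fun t : ℝ => ∫ s in (0:ℝ)..t, Real.exp (-(s^2))) atTop
      (nhds (Real.sqrt Real.pi / 2)) := by
  have hint : MeasureTheory.IntegrableOn (fun s : ℝ => Real.exp (-(s^2))) (Set.Ioi 0) := by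
    have := (integrable_exp_neg_mul_sq (one_pos)).integrableOn (s := Set.Ioi 0)
    simpa using this
  have h := MeasureTheory.intervalIntegral_tendsto_integral_Ioi 0 hint tendsto_id
  have hval : (∫ s in Set.Ioi (0:ℝ), Real.exp (-(s^2))) = Real.sqrt Real.pi / 2 := by
    have := integral_gaussian_Ioi 1
    simpa using this
  rwa [hval] at h

lemma tendsto_phi_one : Filter.Tendsto (fun t : ℝ => φ 1 t) atTop (nhds 2) := by
  have hkey : ∀ t : ℝ, φ 1 t
      = ((1 + 2 / Real.sqrt Real.pi * ∫ s in (0:ℝ)..t, Real.exp (-(s^2)) : ℝ) : ℂ) := by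
    intro t
    rw [phi_eq]
    have : (∫ s in (0:ℝ)..t, 2 * 1 / (Real.sqrt Real.pi : ℂ) * Complex.exp (-(1^2 : ℂ) * s^2))
        = ((2 / Real.sqrt Real.pi * ∫ s in (0:ℝ)..t, Real.exp (-(s^2)) : ℝ) : ℂ) := by
      rw [intervalIntegral.integral_congr
        (g := fun s : ℝ => ((2 / Real.sqrt Real.pi * Real.exp (-(s^2)) : ℝ) : ℂ))]
      · rw [intervalIntegral.integral_ofReal, intervalIntegral.integral_const_mul]
      · intro s _
        push_cast [Complex.ofReal_exp]
        ring_nf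
    rw [this]
    push_cast
    ring
  have hreal : Filter.Tendsto
      (fun t : ℝ => 1 + 2 / Real.sqrt Real.pi * ∫ s in (0:ℝ)..t, Real.exp (-(s^2)))
      atTop (nhds 2) := by
    have h := (tendsto_gauss.const_mul (2 / Real.sqrt Real.pi)).const_add 1
    have hπ : Real.sqrt Real.pi ≠ 0 := Real.sqrt_ne_zero'.2 Real.pi_pos
    have : 1 + 2 / Real.sqrt Real.pi * (Real.sqrt Real.pi / 2) = 2 := by
      field_simp
      norm_num
    rwa [this] at h
  have hcomp := (Complex.continuous_ofReal.tendsto (2:ℝ)).comp hreal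
  simp only [Function.comp_def] at hcomp
  have h2c : ((2:ℝ):ℂ) = (2:ℂ) := by norm_num
  rw [h2c] at hcomp
  exact hcomp.congr fun t => (hkey t).symm

lemma int_exp_bound {t : ℝ} (ht : 0 ≤ t) :
    ∫ s in (0:ℝ)..t, Real.exp (s^2/2) ≤ Real.exp (t^2/2 + t) := by
  have hderiv : ∀ s : ℝ, HasDerivAt (fun x : ℝ => Real.exp (x^2/2 + x))
      ((s + 1) * Real.exp (s^2/2 + s)) s := by
    intro s
    have hin : HasDerivAt (fun x : ℝ => x^2/2 + x) (s + 1) s := by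
      have h1 : HasDerivAt (fun x : ℝ => x^2/2 + x) _ s := ((hasDerivAt_pow 2 s).div_const 2).add (hasDerivAt_id s)
      convert h1 using 1
      simp [pow_one]
    have := hin.exp
    convert this using 1
    ring
  have hFTC : (∫ s in (0:ℝ)..t, (s + 1) * Real.exp (s^2/2 + s))
      = Real.exp (t^2/2 + t) - 1 := by
    rw [intervalIntegral.integral_eq_sub_of_hasDerivAt (fun s _ => hderiv s)
      (((continuous_id.add continuous_const).mul
        (Real.continuous_exp.comp ((continuous_pow 2).div_const 2 |>.add continuous_id))).intervalIntegrable 0 t)]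
    norm_num
  have hmono : (∫ s in (0:ℝ)..t, Real.exp (s^2/2))
      ≤ ∫ s in (0:ℝ)..t, (s + 1) * Real.exp (s^2/2 + s) := by
    apply intervalIntegral.integral_mono_on ht
    · exact (Real.continuous_exp.comp ((continuous_pow 2).div_const 2)).intervalIntegrable 0 t
    · exact (((continuous_id.add continuous_const).mul
        (Real.continuous_exp.comp ((continuous_pow 2).div_const 2 |>.add continuous_id)))).intervalIntegrable 0 t
    · intro s hs
      have hs0 : 0 ≤ s := hs.1
      have h1 : Real.exp (s^2/2) ≤ Real.exp (s^2/2 + s) := Real.exp_le_exp.2 (by linarith)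
      nlinarith [Real.exp_pos (s^2/2 + s)]
  have := Real.exp_pos (t^2/2 + t)
  linarith [hmono, hFTC]

lemma norm_E_bound {u : ℂ} (hu2 : (u^2).re = -(1/2)) (hnu : ‖u‖ = 1)
    {t : ℝ} (ht : 0 ≤ t) :
    ‖E (u * t)‖ ≤ Real.exp (-(t^2)/2) + 2 * Real.exp t := by
  have hπ1 : (1:ℝ) ≤ Real.sqrt Real.pi := by
    rw [show (1:ℝ) = Real.sqrt 1 by simp]
    exact Real.sqrt_le_sqrt (by linarith [Real.pi_gt_three])
  have hπ0 : (0:ℝ) < Real.sqrt Real.pi := by linarith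
  -- norm of the integrand
  have hnormi : ∀ s : ℝ, ‖2 * u / (Real.sqrt Real.pi : ℂ) * Complex.exp (-(u^2) * s^2)‖
      ≤ 2 * Real.exp (s^2/2) := by
    intro s
    rw [norm_mul, norm_div, norm_mul]
    have he : ‖Complex.exp (-(u^2) * (s:ℂ)^2)‖ = Real.exp (s^2/2) := by
      rw [Complex.norm_exp]
      congr 1
      have hmul : -(u^2) * (s:ℂ)^2 = ((s^2 : ℝ) : ℂ) * (-(u^2)) := by push_cast; ring
      rw [hmul, Complex.re_ofReal_mul]
      simp [hu2]
      ring
    rw [he, hnu]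
    simp only [Complex.norm_ofNat, Complex.norm_real, Real.norm_eq_abs,
      abs_of_pos hπ0, mul_one]
    have h1 : (2:ℝ) / Real.sqrt Real.pi ≤ 2 := by
      rw [div_le_iff₀ hπ0]; nlinarith
    nlinarith [Real.exp_pos (s^2/2)]
  -- bound on φ
  have hφ : ‖φ u t‖ ≤ 1 + 2 * Real.exp (t^2/2 + t) := by
    rw [phi_eq]
    calc ‖1 + ∫ s in (0:ℝ)..t, 2 * u / (Real.sqrt Real.pi : ℂ) * Complex.exp (-(u^2) * s^2)‖
        ≤ 1 + ‖∫ s in (0:ℝ)..t, 2 * u / (Real.sqrt Real.pi : ℂ) * Complex.exp (-(u^2) * s^2)‖ := by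
          calc ‖(1:ℂ) + _‖ ≤ ‖(1:ℂ)‖ + _ := norm_add_le _ _
            _ = 1 + _ := by norm_num
      _ ≤ 1 + 2 * Real.exp (t^2/2 + t) := by
          gcongr
          have hg_int : IntervalIntegrable (fun s : ℝ => 2 * Real.exp (s^2/2))
              MeasureTheory.volume 0 t :=
            (continuous_const.mul (Real.continuous_exp.comp ((continuous_pow 2).div_const 2))).intervalIntegrable 0 t
          have h1 := intervalIntegral.norm_integral_le_abs_of_norm_le
            (Filter.Eventually.of_forall fun s => hnormi s) hg_int
          have h2 : |∫ s in (0:ℝ)..t, 2 * Real.exp (s^2/2)|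
              = ∫ s in (0:ℝ)..t, 2 * Real.exp (s^2/2) := by
            apply abs_of_nonneg
            apply intervalIntegral.integral_nonneg ht
            intro s _
            positivity
          rw [h2] at h1
          refine h1.trans ?_
          rw [intervalIntegral.integral_const_mul]
          nlinarith [int_exp_bound ht]
  -- now convert to bound on E
  have hEeq : E (u * t) = Complex.exp (u^2 * (t:ℂ)^2) * φ u t := by
    unfold φ
    rw [← mul_assoc, ← Complex.exp_add]
    have h0 : u^2 * (t:ℂ)^2 + -(u^2) * (t:ℂ)^2 = 0 := by ring
    rw [h0, Complex.exp_zero, one_mul]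
  have hnormexp : ‖Complex.exp (u^2 * (t:ℂ)^2)‖ = Real.exp (-(t^2)/2) := by
    rw [Complex.norm_exp]
    congr 1
    have hmul : u^2 * (t:ℂ)^2 = ((t^2:ℝ):ℂ) * u^2 := by push_cast; ring
    rw [hmul, Complex.re_ofReal_mul, hu2]
    ring
  rw [hEeq, norm_mul, hnormexp]
  have hexp_pos : (0:ℝ) < Real.exp (-(t^2)/2) := Real.exp_pos _
  calc Real.exp (-(t^2)/2) * ‖φ u t‖
      ≤ Real.exp (-(t^2)/2) * (1 + 2 * Real.exp (t^2/2 + t)) :=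
        mul_le_mul_of_nonneg_left hφ hexp_pos.le
    _ = Real.exp (-(t^2)/2) + 2 * (Real.exp (-(t^2)/2) * Real.exp (t^2/2 + t)) := by ring
    _ = Real.exp (-(t^2)/2) + 2 * Real.exp t := by
        rw [← Real.exp_add]
        have harg : -(t^2)/2 + (t^2/2 + t) = t := by ring
        rw [harg]

lemma indicator_vanish {n : ℕ} (hn : n % 3 ≠ 2) : 1 + ω^(n+1) + ω^(2*(n+1)) = 0 := by
  have h := cube_ind (n+1)
  rw [if_neg (by omega)] at h
  exact h

lemma indicator_three (k : ℕ) : 1 + ω^(3*k+2+1) + ω^(2*(3*k+2+1)) = 3 := by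
  have h := cube_ind (3*k+2+1)
  rw [if_pos (by omega)] at h
  exact h

lemma decomp (t : ℝ) :
    ∑' k : ℕ, ((t ^ (3*k+2) / Real.Gamma (3 * (k:ℝ) / 2 + 2) : ℝ) : ℂ)
      = (E t + ω * E (ω * t) + ω^2 * E (ω^2 * t)) / 3 := by
  set g : ℕ → ℂ := fun n => (1 + ω^(n+1) + ω^(2*(n+1))) * (a n : ℂ) * (t:ℂ)^n / 3 with hg
  have hterm : ∀ k : ℕ, ((t ^ (3*k+2) / Real.Gamma (3 * (k:ℝ) / 2 + 2) : ℝ) : ℂ)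
      = g (3*k+2) := by
    intro k
    have hΓ : Real.Gamma (3 * (k:ℝ) / 2 + 2) = Real.Gamma (((3*k+2 : ℕ) : ℝ)/2 + 1) := by
      congr 1
      push_cast
      ring
    rw [hg]
    simp only
    rw [indicator_three k]
    have ha : a (3*k+2) = 1 / Real.Gamma (3 * (k:ℝ)/2 + 2) := by
      unfold a
      rw [← hΓ]
    rw [ha]
    push_cast
    ring
  rw [tsum_congr hterm]
  -- now reindex
  have hinj : Function.Injective (fun k : ℕ => 3*k+2) := by
    intro x y h
    simp only at h
    omega
  have hsupp : Function.support g ⊆ Set.range (fun k : ℕ => 3*k+2) := by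
    intro n hn
    by_contra hr
    apply hn
    have hmod : n % 3 ≠ 2 := by
      intro h
      exact hr ⟨n/3, show 3*(n/3)+2 = n by omega⟩
    rw [hg]
    simp only
    rw [indicator_vanish hmod]
    simp
  rw [hinj.tsum_eq hsupp]
  -- expand g and split the sum
  have hgsplit : ∀ n : ℕ, g n = (a n : ℂ) * (t:ℂ)^n / 3 + ω * ((a n : ℂ) * (ω * t)^n) / 3
      + ω^2 * ((a n : ℂ) * (ω^2 * t)^n) / 3 := by
    intro n
    rw [hg]
    simp only [mul_pow, pow_mul, pow_succ]
    ring
  rw [tsum_congr hgsplit]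
  have s1 : Summable (fun n : ℕ => (a n : ℂ) * (t:ℂ)^n / 3) := (summable_E _).div_const 3
  have s2 : Summable (fun n : ℕ => ω * ((a n : ℂ) * (ω * t)^n) / 3) :=
    ((summable_E _).mul_left ω).div_const 3
  have s3 : Summable (fun n : ℕ => ω^2 * ((a n : ℂ) * (ω^2 * t)^n) / 3) :=
    ((summable_E _).mul_left (ω^2)).div_const 3
  rw [Summable.tsum_add (s1.add s2) s3, Summable.tsum_add s1 s2]
  rw [tsum_div_const, tsum_div_const, tsum_div_const, tsum_mul_left, tsum_mul_left]
  unfold E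
  ring

lemma W1_eq {ξ : ℝ} (hξ : 0 ≤ ξ) :
    ((W1 ξ : ℝ) : ℂ) = (E (Real.sqrt ξ) + ω * E (ω * Real.sqrt ξ)
      + ω^2 * E (ω^2 * Real.sqrt ξ)) / 3 := by
  set t := Real.sqrt ξ with htdef
  have ht : 0 ≤ t := Real.sqrt_nonneg ξ
  have hξt : ξ = t^2 := (Real.sq_sqrt hξ).symm
  have hpow : ∀ k : ℕ, ξ ^ (3 * (k:ℝ) / 2 + 1) = t ^ (3*k+2) := by
    intro k
    rw [hξt, ← Real.rpow_natCast t 2, ← Real.rpow_mul ht]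
    rw [← Real.rpow_natCast t (3*k+2)]
    congr 1
    push_cast
    ring
  have hW : W1 ξ = ∑' k : ℕ, t ^ (3*k+2) / Real.Gamma (3 * (k:ℝ) / 2 + 2) := by
    unfold W1
    exact tsum_congr fun k => by rw [hpow k]
  rw [hW, Complex.ofReal_tsum]
  exact decomp t

lemma exp_cast (t : ℝ) : ((Real.exp (-(t^2)) : ℝ) : ℂ) = Complex.exp (-(t:ℂ)^2) := by
  rw [Complex.ofReal_exp]
  congr 1
  push_cast
  ring

lemma h1_limit : Filter.Tendsto (fun t : ℝ => Complex.exp (-(t:ℂ)^2) * E t) atTop (nhds 2) := by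
  apply tendsto_phi_one.congr
  intro t
  unfold φ
  norm_num

lemma h2_limit : Filter.Tendsto
    (fun t : ℝ => Complex.exp (-(t:ℂ)^2) * (ω * E (ω * t) + ω^2 * E (ω^2 * t)))
    atTop (nhds 0) := by
  have hg0 : Filter.Tendsto (fun t : ℝ => 6 * Real.exp (2 - t)) atTop (nhds 0) := by
    have hb : Filter.Tendsto (fun t : ℝ => 2 + (-t)) atTop atBot :=
      tendsto_atBot_add_const_left atTop 2 tendsto_neg_atTop_atBot
    have he := Real.tendsto_exp_atBot.comp hb
    have he' : Filter.Tendsto (fun t : ℝ => Real.exp (2 - t)) atTop (nhds 0) := by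
      apply he.congr
      intro t
      simp [Function.comp, sub_eq_add_neg]
    have := he'.const_mul (6:ℝ)
    simpa using this
  apply squeeze_zero_norm' _ hg0
  filter_upwards [eventually_ge_atTop (0:ℝ)] with t ht
  have hnx : ‖Complex.exp (-(t:ℂ)^2)‖ = Real.exp (-(t^2)) := by
    rw [← exp_cast, Complex.norm_real, Real.norm_eq_abs, abs_of_pos (Real.exp_pos _)]
  have hb1 : ‖ω * E (ω * t)‖ ≤ Real.exp (-(t^2)/2) + 2 * Real.exp t := by
    rw [norm_mul]
    have := norm_E_bound re_ω2 (by rw [abs_ω]) ht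
    calc ‖ω‖ * ‖E (ω * t)‖ = ‖E (ω * t)‖ := by
          rw [abs_ω, one_mul]
      _ ≤ _ := this
  have hb2 : ‖ω^2 * E (ω^2 * t)‖ ≤ Real.exp (-(t^2)/2) + 2 * Real.exp t := by
    rw [norm_mul]
    have hu2 : ((ω^2)^2).re = -(1/2) := by
      have h4 : (ω^2)^2 = ω^4 := by ring
      rw [h4, re_ω4]
    have := norm_E_bound hu2 (norm_ω_pow 2) ht
    calc ‖ω^2‖ * ‖E (ω^2 * t)‖ = ‖E (ω^2 * t)‖ := by rw [norm_ω_pow 2, one_mul]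
      _ ≤ _ := this
  calc ‖Complex.exp (-(t:ℂ)^2) * (ω * E (ω * t) + ω^2 * E (ω^2 * t))‖
      = Real.exp (-(t^2)) * ‖ω * E (ω * t) + ω^2 * E (ω^2 * t)‖ := by rw [norm_mul, hnx]
    _ ≤ Real.exp (-(t^2)) * (2 * Real.exp (-(t^2)/2) + 4 * Real.exp t) := by
        apply mul_le_mul_of_nonneg_left _ (Real.exp_pos _).le
        calc ‖ω * E (ω * t) + ω^2 * E (ω^2 * t)‖ ≤ ‖ω * E (ω * t)‖ + ‖ω^2 * E (ω^2 * t)‖ :=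
              norm_add_le _ _
          _ ≤ 2 * Real.exp (-(t^2)/2) + 4 * Real.exp t := by linarith
    _ = 2 * Real.exp (-(t^2) + -(t^2)/2) + 4 * Real.exp (t + -(t^2)) := by
        rw [Real.exp_add, Real.exp_add]
        ring
    _ ≤ 6 * Real.exp (2 - t) := by
        have e1 : Real.exp (-(t^2) + -(t^2)/2) ≤ Real.exp (2 - t) :=
          Real.exp_le_exp.2 (by nlinarith)
        have e2 : Real.exp (t + -(t^2)) ≤ Real.exp (2 - t) :=
          Real.exp_le_exp.2 (by nlinarith)
        linarith

lemma hC_limit : Filter.Tendsto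
    (fun t : ℝ => Complex.exp (-(t:ℂ)^2) * ((E t + ω * E (ω * t) + ω^2 * E (ω^2 * t)) / 3))
    atTop (nhds ((2/3 : ℝ) : ℂ)) := by
  have h := (h1_limit.add h2_limit).div_const (3:ℂ)
  have h23 : ((2:ℂ) + 0) / 3 = ((2/3 : ℝ) : ℂ) := by norm_num
  rw [h23] at h
  apply h.congr
  intro t
  ring


end Stmt17Aux

open Stmt17Aux in
/-- `e^{−ξ} · W₁(ξ) → 2/3` as `ξ → ∞`: the solution with `V(0)=0`, `V'(0)=1`
grows exponentially like `e^ξ`. -/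
theorem stmt_17 :
    Filter.Tendsto (fun ξ : ℝ => Real.exp (-ξ) * W1 ξ) Filter.atTop
      (nhds (2 / 3)) := by
  have hsqrt : Filter.Tendsto Real.sqrt atTop atTop := by
    apply tendsto_atTop_atTop.2
    intro b
    refine ⟨b^2, fun x hx => ?_⟩
    calc b ≤ |b| := le_abs_self b
      _ = Real.sqrt (b^2) := (Real.sqrt_sq_eq_abs b).symm
      _ ≤ Real.sqrt x := Real.sqrt_le_sqrt hx
  have hcomp := hC_limit.comp hsqrt
  simp only [Function.comp_def] at hcomp
  have hfinal : Filter.Tendsto (fun ξ : ℝ => ((Real.exp (-ξ) * W1 ξ : ℝ) : ℂ)) atTop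
      (nhds ((2/3 : ℝ) : ℂ)) := by
    apply hcomp.congr'
    filter_upwards [eventually_ge_atTop (0:ℝ)] with ξ hξ
    have hsq : ((Real.sqrt ξ : ℝ) : ℂ)^2 = (ξ : ℂ) := by
      rw [← Complex.ofReal_pow, Real.sq_sqrt hξ]
    rw [Complex.ofReal_mul, W1_eq hξ]
    congr 1
    rw [Complex.ofReal_exp]
    congr 1
    rw [hsq]
    push_cast
    ring
  have hre := (Complex.continuous_re.tendsto _).comp hfinal
  simp only [Function.comp_def, Complex.ofReal_re] at hre
  exact hre
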